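/- Let ℓ ≥ 1 and let z = a + ib be a complex number with b ∈ [-π/2, π/2]. Then the real part of φ_ℓ(z) is strictly positive; in particular φ_ℓ(z) ≠ 0. -/

import Mathlib

/-!
Expanding `exp (τ z)` and integrating term by term against `(1 - τ) ^ n` with the Beta integral
`∫₀¹ τ ^ k (1 - τ) ^ n dτ = k! n! / (k + n + 1)!` gives
`n! φ_{n+1}(z) = ∫₀¹ exp (τ z) (1 - τ) ^ n dτ`. The real part of the integrand is
`exp (τ a) cos (τ b) (1 - τ) ^ n`, and `|τ b| < π / 2` for `τ ∈ (0, 1)` when `|b| ≤ π / 2`.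
-/

noncomputable def phi (ℓ : ℕ) (z : ℂ) : ℂ :=
  ∑' k : ℕ, z ^ k / (Nat.factorial (k + ℓ) : ℂ)

open intervalIntegral
open scoped Nat Interval

theorem integral_pow_mul_one_sub_pow (k n : ℕ) :
    ∫ x in (0 : ℝ)..1, (x : ℂ) ^ k * (1 - (x : ℂ)) ^ n = k ! * n ! / (k + n + 1)! := by
  have h := Complex.Gamma_mul_Gamma_eq_betaIntegral (s := k + 1) (t := n + 1)
    (by simp; positivity) (by simp; positivity)
  rw [show (k + 1 + (n + 1) : ℂ) = ((k + n + 1 : ℕ) : ℂ) + 1 by push_cast; ring,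
    Complex.Gamma_nat_eq_factorial, Complex.Gamma_nat_eq_factorial,
    Complex.Gamma_nat_eq_factorial, Complex.betaIntegral] at h
  simp only [add_sub_cancel_right, Complex.cpow_natCast] at h
  rw [h, mul_div_cancel_left₀ _ (by exact_mod_cast (k + n + 1).factorial_ne_zero)]

theorem Complex.exp_re_pos_of_abs_im_lt {w : ℂ} (h : |w.im| < Real.pi / 2) : 0 < (exp w).re := by
  rw [exp_re]
  exact mul_pos (Real.exp_pos _) (Real.cos_pos_of_mem_Ioo (abs_lt.mp h))

theorem phi_succ_eq_integral (n : ℕ) (z : ℂ) :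
    (n ! : ℂ) * phi (n + 1) z = ∫ τ in (0 : ℝ)..1, Complex.exp (τ * z) * ((1 - τ) ^ n : ℝ) := by
  set F : ℕ → ℝ → ℂ := fun k τ => (τ * z) ^ k / k ! * ((1 - τ) ^ n : ℝ)
  have hF_integral (k : ℕ) : ∫ τ in (0 : ℝ)..1, F k τ = n ! * (z ^ k / (k + (n + 1))!) := by
    simp only [F, mul_pow, Complex.ofReal_pow, Complex.ofReal_sub, Complex.ofReal_one]
    have hF_eq : ∀ τ : ℝ, (τ : ℂ) ^ k * z ^ k / k ! * (1 - (τ : ℂ)) ^ n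
        = z ^ k / k ! * ((τ : ℂ) ^ k * (1 - (τ : ℂ)) ^ n) := fun τ => by ring
    simp_rw [hF_eq]
    rw [integral_const_mul, integral_pow_mul_one_sub_pow, ← add_assoc]
    have : (k ! : ℂ) ≠ 0 := by exact_mod_cast k.factorial_ne_zero
    field_simp
  have hF_bound (k : ℕ) : ∀ τ ∈ Ι (0 : ℝ) 1, ‖F k τ‖ ≤ ‖z‖ ^ k / k ! := by
    rw [Set.uIoc_of_le zero_le_one]
    rintro τ ⟨h0, h1⟩
    have hτ : ‖(τ : ℂ)‖ ≤ 1 := by rwa [Complex.norm_real, Real.norm_of_nonneg h0.le]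
    have hτ' : ‖(((1 - τ) ^ n : ℝ) : ℂ)‖ ≤ 1 := by
      rw [Complex.norm_real, Real.norm_of_nonneg (by bound)]
      exact pow_le_one₀ (by linarith) (by linarith)
    calc ‖F k τ‖ = ‖(τ : ℂ)‖ ^ k * (‖z‖ ^ k / k !) * ‖(((1 - τ) ^ n : ℝ) : ℂ)‖ := by
          simp only [F, norm_mul, norm_div, norm_pow, Complex.norm_natCast]; ring
      _ ≤ 1 * (‖z‖ ^ k / k !) * 1 := by gcongr; exact pow_le_one₀ (norm_nonneg _) hτ
      _ = ‖z‖ ^ k / k ! := by ring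
  have hsum : HasSum (fun k => ∫ τ in (0 : ℝ)..1, F k τ)
      (∫ τ in (0 : ℝ)..1, Complex.exp (τ * z) * ((1 - τ) ^ n : ℝ)) :=
    hasSum_integral_of_dominated_convergence (fun k _ => ‖z‖ ^ k / k !)
      (fun k => by fun_prop) (fun k => MeasureTheory.ae_of_all _ (hF_bound k))
      (MeasureTheory.ae_of_all _ fun _ _ => Real.summable_pow_div_factorial _)
      intervalIntegrable_const
      (MeasureTheory.ae_of_all _ fun τ _ => by
        rw [Complex.exp_eq_exp_ℂ]
        exact (NormedSpace.expSeries_div_hasSum_exp (τ * z)).mul_right _)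
  rw [phi, ← tsum_mul_left, ← hsum.tsum_eq]
  simp_rw [hF_integral]

theorem re_integral_exp_mul_one_sub_pow_pos (n : ℕ) {z : ℂ} (hz : |z.im| ≤ Real.pi / 2) :
    0 < (∫ τ in (0 : ℝ)..1, Complex.exp (τ * z) * ((1 - τ) ^ n : ℝ)).re := by
  have hcont : Continuous fun τ : ℝ => Complex.exp (τ * z) * ((1 - τ) ^ n : ℝ) := by fun_prop
  have hre := intervalIntegral_re (hcont.intervalIntegrable (μ := MeasureTheory.volume) 0 1)
  simp only [RCLike.re_to_complex] at hre
  rw [← hre]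
  refine intervalIntegral_pos_of_pos_on ((Complex.continuous_re.comp hcont).intervalIntegrable _ _)
    (fun τ ⟨h0, h1⟩ => ?_) zero_lt_one
  simp only [Complex.re_mul_ofReal]
  refine mul_pos (Complex.exp_re_pos_of_abs_im_lt ?_) (pow_pos (by linarith) n)
  rw [Complex.im_ofReal_mul, abs_mul, abs_of_pos h0]
  nlinarith [Real.pi_pos, abs_nonneg z.im]

theorem phi_re_pos_on_strip (ℓ : ℕ) (hℓ : 1 ≤ ℓ) (z : ℂ)
    (hz : z.im ∈ Set.Icc (-(Real.pi / 2)) (Real.pi / 2)) :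
    0 < (phi ℓ z).re ∧ phi ℓ z ≠ 0 := by
  obtain ⟨n, rfl⟩ := Nat.exists_eq_add_of_le' hℓ
  have h := re_integral_exp_mul_one_sub_pow_pos n (abs_le.mpr hz)
  rw [← phi_succ_eq_integral] at h
  simp only [Complex.mul_re, Complex.natCast_re, Complex.natCast_im, zero_mul, sub_zero] at h
  have hre : 0 < (phi (n + 1) z).re := pos_of_mul_pos_right h (by positivity)
  exact ⟨hre, fun h0 => by simp [h0] at hre⟩
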